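/- A right Serre functor on a k-linear category with finite-dimensional Hom-spaces is fully faithful. -/

import Mathlib

/-!
Naturality of `η` in both variables gives `η (S X) Y (S.map f) g = η Y X g f`. Hence `S.map`
on `X ⟶ Y` factors as the composite of linear equivalences
`(X ⟶ Y) ≃ (X ⟶ Y)** ≃ (Y ⟶ S X)^* ≃ (S X ⟶ S Y)`, the first one being the canonical
embedding into the double dual, an isomorphism since `X ⟶ Y` is finite-dimensional.
-/

open CategoryTheory

universe v u

/-- A right Serre functor on a `k`-linear category `C`: an endofunctor `S`
together with isomorphisms `C(X, S Y) ≅ C(Y, X)^*`, natural in both variables. -/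
structure RightSerreData (k : Type*) [Field k]
    (C : Type u) [Category.{v} C] [Preadditive C] [Linear k C] where
  S : C ⥤ C
  η : ∀ X Y : C, (X ⟶ S.obj Y) ≃ₗ[k] Module.Dual k (Y ⟶ X)
  nat_left : ∀ {X X' Y : C} (f : X' ⟶ X) (φ : X ⟶ S.obj Y) (g : Y ⟶ X'),
    η X' Y (f ≫ φ) g = η X Y φ (g ≫ f)
  nat_right : ∀ {X Y Y' : C} (g : Y ⟶ Y') (φ : X ⟶ S.obj Y) (h : Y' ⟶ X),
    η X Y' (φ ≫ S.map g) h = η X Y φ (g ≫ h)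

namespace RightSerreData

variable {k : Type*} [Field k] {C : Type u} [Category.{v} C] [Preadditive C] [Linear k C]
  (S : RightSerreData k C)

theorem η_map_apply {X Y : C} (f : X ⟶ Y) (g : Y ⟶ S.S.obj X) :
    S.η (S.S.obj X) Y (S.S.map f) g = S.η Y X g f := by
  simpa using (S.nat_right f (𝟙 _) g).trans (S.nat_left g (𝟙 _) f).symm

noncomputable def mapEquiv (X Y : C) [FiniteDimensional k (X ⟶ Y)] :
    (X ⟶ Y) ≃ₗ[k] (S.S.obj X ⟶ S.S.obj Y) :=
  (Module.evalEquiv k (X ⟶ Y)).trans ((S.η Y X).dualMap.trans (S.η (S.S.obj X) Y).symm)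

theorem mapEquiv_apply {X Y : C} [FiniteDimensional k (X ⟶ Y)] (f : X ⟶ Y) :
    S.mapEquiv X Y f = S.S.map f := by
  rw [mapEquiv, LinearEquiv.trans_apply, LinearEquiv.trans_apply, LinearEquiv.symm_apply_eq]
  ext g
  simp [η_map_apply]

theorem map_bijective (X Y : C) [FiniteDimensional k (X ⟶ Y)] :
    Function.Bijective (S.S.map : (X ⟶ Y) → (S.S.obj X ⟶ S.S.obj Y)) := by
  simpa only [← funext (S.mapEquiv_apply (X := X) (Y := Y))] using (S.mapEquiv X Y).bijective

end RightSerreData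

/-- A right Serre functor on a `k`-linear category with finite-dimensional
Hom-spaces is fully faithful. -/
theorem rightSerre_fully_faithful (k : Type*) [Field k]
    (C : Type u) [Category.{v} C] [Preadditive C] [Linear k C]
    (hfin : ∀ X Y : C, FiniteDimensional k (X ⟶ Y))
    (S : RightSerreData k C) :
    S.S.Full ∧ S.S.Faithful := by
  obtain ⟨hS⟩ := (Functor.FullyFaithful.nonempty_iff_map_bijective S.S).2
    fun X Y => have := hfin X Y; S.map_bijective X Y
  exact ⟨hS.full, hS.faithful⟩
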